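/- Let n ≥ 1 and let r, r' be positive integers. Suppose given integers χt_1, …, χt_n and χE_1, …, χE_n with r·χt_i ≤ r'·χE_i for all i, integers rP_1, …, rP_{n−1} with 0 ≤ rP_j ≤ r' for all j, and integers χF, χE satisfying χF ≤ Σ_{i=1}^n χt_i − Σ_{j=1}^{n−1} (2(r' − rP_j) + rP_j) and χE = Σ_{i=1}^n χE_i − (n−1)·r. Then, as rational numbers, χF/r' ≤ χE/r − Σ_{j=1}^{n−1} (r' − rP_j)/r'; in particular χF/r' ≤ χE/r. -/
import Mathlib


open Finset in
/-- Arithmetic content, iterated along a chain of `n` components joined at `n-1`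
nodes, underlying Corollary 7 (ℓ-semistability on a curve of compact type). -/
theorem ell_semistable_chain_arithmetic
    (n : ℕ) (hn : 1 ≤ n) (r r' : ℤ) (hr : 0 < r) (hr' : 0 < r')
    (χt χE' : Fin n → ℤ)
    (hsemi : ∀ i, r * χt i ≤ r' * χE' i)
    (rP : Fin (n - 1) → ℤ)
    (hrP0 : ∀ j, 0 ≤ rP j) (hrP1 : ∀ j, rP j ≤ r')
    (χF χE : ℤ)
    (hF : χF ≤ (∑ i, χt i) - ∑ j, (2 * (r' - rP j) + rP j))
    (hE : χE = (∑ i, χE' i) - ((n : ℤ) - 1) * r) :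
    (χF : ℚ) / r' ≤ (χE : ℚ) / r - ∑ j, ((r' : ℚ) - rP j) / r' ∧
      (χF : ℚ) / r' ≤ (χE : ℚ) / r := by
  have hrQ : (0:ℚ) < r := by exact_mod_cast hr
  have hr'Q : (0:ℚ) < r' := by exact_mod_cast hr'
  have hA : (∑ i, (χt i : ℚ))/r' ≤ (∑ i, (χE' i : ℚ))/r := by
    rw [div_le_div_iff₀ hr'Q hrQ, Finset.sum_mul, Finset.sum_mul]
    apply Finset.sum_le_sum
    intro i _
    have h : (r:ℚ) * χt i ≤ (r':ℚ) * χE' i := by exact_mod_cast hsemi i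
    linarith
  have hB : (χF:ℚ) ≤ (∑ i, (χt i:ℚ)) - ∑ j, (2*((r':ℚ) - rP j) + rP j) := by
    exact_mod_cast hF
  have hE2 : (χE:ℚ)/r = (∑ i, (χE' i:ℚ))/r - ((n:ℚ)-1) := by
    have h : (χE:ℚ) = (∑ i, (χE' i:ℚ)) - ((n:ℚ)-1)*r := by exact_mod_cast hE
    rw [h, sub_div, mul_div_assoc, div_self hrQ.ne', mul_one]
  have hS : ∑ j : Fin (n-1), (2*((r':ℚ)-rP j)+rP j)/r'
      = (∑ j, ((r':ℚ)-rP j)/r') + ((n:ℚ)-1) := by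
    have h : ∀ j : Fin (n-1), (2*((r':ℚ)-rP j)+rP j)/r' = ((r':ℚ)-rP j)/r' + 1 := by
      intro j; field_simp; ring
    rw [Finset.sum_congr rfl (fun j _ => h j), Finset.sum_add_distrib]
    simp only [Finset.sum_const, Finset.card_univ, Fintype.card_fin, nsmul_eq_mul, mul_one]
    rw [Nat.cast_sub hn]
    push_cast
    ring
  have h1 : (χF:ℚ)/r' ≤ (∑ i, (χt i:ℚ))/r' - ∑ j, (2*((r':ℚ)-rP j)+rP j)/r' := by
    rw [← Finset.sum_div, ← sub_div]
    gcongr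
  have key : (χF:ℚ)/r' ≤ (χE:ℚ)/r - ∑ j, ((r':ℚ)-rP j)/r' := by
    rw [hE2] at *
    rw [hS] at h1
    linarith
  refine ⟨key, ?_⟩
  have hnn : 0 ≤ ∑ j : Fin (n-1), ((r':ℚ)-rP j)/r' := by
    apply Finset.sum_nonneg
    intro j _
    apply div_nonneg _ hr'Q.le
    have := hrP1 j
    have : (rP j : ℚ) ≤ r' := by exact_mod_cast this
    linarith
  linarith
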